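/- Let F be a convex class of probability measures on Ω and T : F → A ⊆ ℝ^k be mixture-continuous and surjective onto A. Let S : A × Ω → ℝ be (strictly) F-consistent for T and let ‖·‖ be a norm on ℝ^k. Then S is (strictly) metrically F-order-sensitive for T relative to ‖·‖ if and only if for all F ∈ F with t = T(F) and all x, z ∈ A: ‖x − t‖ = ‖z − t‖ implies S̄(x,F) = S̄(z,F). -/

import Mathlib

/-!
Fix `F` and actions `x, z` with `‖x - T F‖ < ‖z - T F‖`, and pick `G` with `T G = z`. Along the
mixtures `(1 - λ) F + λ G` the value `T` moves continuously from `T F` to `z`, and `‖·‖` is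
continuous (a seminorm on `ℝ^k` is convex), so by the intermediate value theorem some `λ < 1`
gives `w = T((1 - λ) F + λ G)` on the sphere through `x`; by hypothesis `S̄(x, F) = S̄(w, F)`.
Consistency at the mixture and at `G`, together with the linearity of `S̄(a, ·)` in the measure,
yields `(1 - λ) S̄(w, F) ≤ (1 - λ) S̄(z, F)`, strictly if `S` is strictly consistent. The converse
is immediate.
-/

open MeasureTheory ENNReal

noncomputable def escore {α Ω : Type*} [MeasurableSpace Ω]
    (S : α → Ω → ℝ) (x : α) (F : Measure Ω) : ℝ :=
  ∫ y, S x y ∂F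

/-- The mixture `(1 - lam) • F + lam • G` of two measures. -/
noncomputable def mix {Ω : Type*} [MeasurableSpace Ω]
    (F G : Measure Ω) (lam : ℝ) : Measure Ω :=
  ENNReal.ofReal (1 - lam) • F + ENNReal.ofReal lam • G

/-- The class `𝓕` is convex (closed under mixtures). -/
def MixConvex {Ω : Type*} [MeasurableSpace Ω] (𝓕 : Set (Measure Ω)) : Prop :=
  ∀ F ∈ 𝓕, ∀ G ∈ 𝓕, ∀ lam ∈ Set.Icc (0:ℝ) 1, mix F G lam ∈ 𝓕

/-- `S` is an `𝓕`-consistent scoring function for `T` on the action domain `A`. -/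
def Consistent {α Ω : Type*} [MeasurableSpace Ω]
    (𝓕 : Set (Measure Ω)) (A : Set α) (T : Measure Ω → α) (S : α → Ω → ℝ) : Prop :=
  ∀ F ∈ 𝓕, ∀ x ∈ A, escore S (T F) F ≤ escore S x F

/-- `S` is a strictly `𝓕`-consistent scoring function for `T` on the action domain `A`. -/
def StrictlyConsistent {α Ω : Type*} [MeasurableSpace Ω]
    (𝓕 : Set (Measure Ω)) (A : Set α) (T : Measure Ω → α) (S : α → Ω → ℝ) : Prop :=
  Consistent 𝓕 A T S ∧
    ∀ F ∈ 𝓕, ∀ x ∈ A, escore S x F = escore S (T F) F → x = T F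

/-- `T` is mixture-continuous: `fun lam => T ((1-lam) • F + lam • G)` is continuous on `[0,1]`. -/
def MixContinuous {Ω : Type*} [MeasurableSpace Ω] {k : ℕ}
    (𝓕 : Set (Measure Ω)) (T : Measure Ω → (Fin k → ℝ)) : Prop :=
  ∀ F ∈ 𝓕, ∀ G ∈ 𝓕, ContinuousOn (fun lam => T (mix F G lam)) (Set.Icc (0:ℝ) 1)

/-- The `ℓ^p`-norm on `ℝ^k`, for `p ∈ [1, ∞]` (given as an extended real). -/
noncomputable def lpNorm {k : ℕ} (p : ℝ≥0∞) (x : Fin k → ℝ) : ℝ :=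
  if p = ⊤ then ⨆ i, |x i| else (∑ i, |x i| ^ p.toReal) ^ (1 / p.toReal)

/-- `S` is metrically `𝓕`-order-sensitive for `T` relative to the norm `nrm`. -/
def MetricallyOS {α Ω : Type*} [MeasurableSpace Ω] [Sub α]
    (𝓕 : Set (Measure Ω)) (A : Set α) (T : Measure Ω → α)
    (S : α → Ω → ℝ) (nrm : α → ℝ) : Prop :=
  ∀ F ∈ 𝓕, ∀ x ∈ A, ∀ z ∈ A,
    nrm (x - T F) ≤ nrm (z - T F) → escore S x F ≤ escore S z F

/-- `S` is strictly metrically `𝓕`-order-sensitive for `T` relative to the norm `nrm`. -/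
def StrictlyMetricallyOS {α Ω : Type*} [MeasurableSpace Ω] [Sub α]
    (𝓕 : Set (Measure Ω)) (A : Set α) (T : Measure Ω → α)
    (S : α → Ω → ℝ) (nrm : α → ℝ) : Prop :=
  MetricallyOS 𝓕 A T S nrm ∧
    ∀ F ∈ 𝓕, ∀ x ∈ A, ∀ z ∈ A,
      nrm (x - T F) < nrm (z - T F) → escore S x F < escore S z F

def EscoreConstOnSpheres {α Ω : Type*} [MeasurableSpace Ω] [Sub α]
    (𝓕 : Set (Measure Ω)) (A : Set α) (T : Measure Ω → α)
    (S : α → Ω → ℝ) (nrm : α → ℝ) : Prop :=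
  ∀ F ∈ 𝓕, ∀ x ∈ A, ∀ z ∈ A,
    nrm (x - T F) = nrm (z - T F) → escore S x F = escore S z F

theorem Seminorm.continuous_of_finiteDimensional {E : Type*} [NormedAddCommGroup E]
    [NormedSpace ℝ E] [FiniteDimensional ℝ E] (p : Seminorm ℝ E) : Continuous p :=
  p.convexOn.locallyLipschitz.continuous

theorem MetricallyOS.escoreConstOnSpheres {α Ω : Type*} [MeasurableSpace Ω] [Sub α]
    {𝓕 : Set (Measure Ω)} {A : Set α} {T : Measure Ω → α} {S : α → Ω → ℝ} {nrm : α → ℝ}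
    (h : MetricallyOS 𝓕 A T S nrm) : EscoreConstOnSpheres 𝓕 A T S nrm :=
  fun F hF x hx z hz hxz => (h F hF x hx z hz hxz.le).antisymm (h F hF z hz x hx hxz.ge)

section Mixture

variable {Ω : Type*} [MeasurableSpace Ω]

@[simp]
theorem mix_zero (F G : Measure Ω) : mix F G 0 = F := by
  simp [mix]

@[simp]
theorem mix_one (F G : Measure Ω) : mix F G 1 = G := by
  simp [mix]

theorem escore_mix {α : Type*} {S : α → Ω → ℝ} {a : α} {F G : Measure Ω}
    (hF : Integrable (S a) F) (hG : Integrable (S a) G) {lam : ℝ} (hlam : lam ∈ Set.Icc 0 1) :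
    escore S a (mix F G lam) = (1 - lam) * escore S a F + lam * escore S a G := by
  rw [escore, mix, integral_add_measure (hF.smul_measure ofReal_ne_top)
      (hG.smul_measure ofReal_ne_top), integral_smul_measure, integral_smul_measure,
    toReal_ofReal (sub_nonneg.2 hlam.2), toReal_ofReal hlam.1]
  rfl

variable {α : Type*} {S : α → Ω → ℝ} {w z : α} {F G : Measure Ω} {lam : ℝ}

theorem escore_le_of_escore_mix_le (hwF : Integrable (S w) F) (hwG : Integrable (S w) G)
    (hzF : Integrable (S z) F) (hzG : Integrable (S z) G) (hlam : lam ∈ Set.Ico 0 1)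
    (hmix : escore S w (mix F G lam) ≤ escore S z (mix F G lam))
    (hG : escore S z G ≤ escore S w G) :
    escore S w F ≤ escore S z F := by
  rw [escore_mix hwF hwG (Set.Ico_subset_Icc_self hlam),
    escore_mix hzF hzG (Set.Ico_subset_Icc_self hlam)] at hmix
  nlinarith [mul_le_mul_of_nonneg_left hG hlam.1, hlam.2]

theorem escore_lt_of_escore_mix_lt (hwF : Integrable (S w) F) (hwG : Integrable (S w) G)
    (hzF : Integrable (S z) F) (hzG : Integrable (S z) G) (hlam : lam ∈ Set.Ico 0 1)
    (hmix : escore S w (mix F G lam) < escore S z (mix F G lam))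
    (hG : escore S z G ≤ escore S w G) :
    escore S w F < escore S z F := by
  rw [escore_mix hwF hwG (Set.Ico_subset_Icc_self hlam),
    escore_mix hzF hzG (Set.Ico_subset_Icc_self hlam)] at hmix
  nlinarith [mul_le_mul_of_nonneg_left hG hlam.1, hlam.2]

end Mixture

section OrderSensitivity

variable {Ω : Type*} [MeasurableSpace Ω] {k : ℕ} {𝓕 : Set (Measure Ω)}
  {A : Set (Fin k → ℝ)} {T : Measure Ω → (Fin k → ℝ)} {S : (Fin k → ℝ) → Ω → ℝ}
  {p : Seminorm ℝ (Fin k → ℝ)}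

theorem exists_mix_seminorm_sub_eq (hmix : MixContinuous 𝓕 T) {F G : Measure Ω}
    (hF : F ∈ 𝓕) (hG : G ∈ 𝓕) {r : ℝ} (hr₀ : 0 ≤ r) (hr : r < p (T G - T F)) :
    ∃ lam ∈ Set.Ico (0 : ℝ) 1, p (T (mix F G lam) - T F) = r := by
  have hcont : ContinuousOn (fun lam => p (T (mix F G lam) - T F)) (Set.Icc 0 1) :=
    p.continuous_of_finiteDimensional.comp_continuousOn ((hmix F hF G hG).sub continuousOn_const)
  obtain ⟨lam, hlam, hr_eq⟩ := intermediate_value_Icc zero_le_one hcont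
    (by simpa using And.intro hr₀ hr.le)
  refine ⟨lam, ⟨hlam.1, hlam.2.lt_of_ne ?_⟩, hr_eq⟩
  rintro rfl
  simp only [mix_one] at hr_eq
  exact hr.ne' hr_eq

theorem exists_intermediate_action (hconv : MixConvex 𝓕) (hmix : MixContinuous 𝓕 T)
    (hsurj : ∀ x ∈ A, ∃ F ∈ 𝓕, T F = x) {F : Measure Ω} (hF : F ∈ 𝓕) {z : Fin k → ℝ}
    (hz : z ∈ A) {r : ℝ} (hr₀ : 0 ≤ r) (hr : r < p (z - T F)) :
    ∃ G ∈ 𝓕, T G = z ∧ ∃ lam ∈ Set.Ico (0 : ℝ) 1,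
      mix F G lam ∈ 𝓕 ∧ p (T (mix F G lam) - T F) = r := by
  obtain ⟨G, hG, rfl⟩ := hsurj z hz
  obtain ⟨lam, hlam, hr_eq⟩ := exists_mix_seminorm_sub_eq hmix hF hG hr₀ hr
  exact ⟨G, hG, rfl, lam, hlam, hconv F hF G hG lam (Set.Ico_subset_Icc_self hlam), hr_eq⟩

theorem Consistent.escore_le_of_seminorm_lt (hcons : Consistent 𝓕 A T S)
    (hconv : MixConvex 𝓕) (hTA : ∀ F ∈ 𝓕, T F ∈ A) (hmix : MixContinuous 𝓕 T)
    (hsurj : ∀ x ∈ A, ∃ F ∈ 𝓕, T F = x) (hSint : ∀ x ∈ A, ∀ F ∈ 𝓕, Integrable (S x) F)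
    (hsph : EscoreConstOnSpheres 𝓕 A T S p) {F : Measure Ω} (hF : F ∈ 𝓕) {x z : Fin k → ℝ}
    (hx : x ∈ A) (hz : z ∈ A) (hxz : p (x - T F) < p (z - T F)) :
    escore S x F ≤ escore S z F := by
  obtain ⟨G, hG, rfl, lam, hlam, hH, hw⟩ :=
    exists_intermediate_action hconv hmix hsurj hF hz (apply_nonneg p _) hxz
  have hwA := hTA _ hH
  rw [hsph F hF x hx _ hwA hw.symm]
  exact escore_le_of_escore_mix_le (hSint _ hwA F hF) (hSint _ hwA G hG) (hSint _ hz F hF)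
    (hSint _ hz G hG) hlam (hcons _ hH _ hz) (hcons G hG _ hwA)

theorem StrictlyConsistent.escore_lt_of_seminorm_lt (hsc : StrictlyConsistent 𝓕 A T S)
    (hconv : MixConvex 𝓕) (hTA : ∀ F ∈ 𝓕, T F ∈ A) (hmix : MixContinuous 𝓕 T)
    (hsurj : ∀ x ∈ A, ∃ F ∈ 𝓕, T F = x) (hSint : ∀ x ∈ A, ∀ F ∈ 𝓕, Integrable (S x) F)
    (hsph : EscoreConstOnSpheres 𝓕 A T S p) {F : Measure Ω} (hF : F ∈ 𝓕) {x z : Fin k → ℝ}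
    (hx : x ∈ A) (hz : z ∈ A) (hxz : p (x - T F) < p (z - T F)) :
    escore S x F < escore S z F := by
  obtain ⟨G, hG, rfl, lam, hlam, hH, hw⟩ :=
    exists_intermediate_action hconv hmix hsurj hF hz (apply_nonneg p _) hxz
  have hwA := hTA _ hH
  have hne : T G ≠ T (mix F G lam) := by
    rintro hGw
    rw [← hGw] at hw
    exact hxz.ne' hw
  have hmix_lt : escore S (T (mix F G lam)) (mix F G lam) < escore S (T G) (mix F G lam) :=
    (hsc.1 _ hH _ hz).lt_of_ne fun h => hne (hsc.2 _ hH _ hz h.symm)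
  rw [hsph F hF x hx _ hwA hw.symm]
  exact escore_lt_of_escore_mix_lt (hSint _ hwA F hF) (hSint _ hwA G hG) (hSint _ hz F hF)
    (hSint _ hz G hG) hlam hmix_lt (hsc.1 G hG _ hwA)

theorem Consistent.metricallyOS_iff (hcons : Consistent 𝓕 A T S)
    (hconv : MixConvex 𝓕) (hTA : ∀ F ∈ 𝓕, T F ∈ A) (hmix : MixContinuous 𝓕 T)
    (hsurj : ∀ x ∈ A, ∃ F ∈ 𝓕, T F = x) (hSint : ∀ x ∈ A, ∀ F ∈ 𝓕, Integrable (S x) F) :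
    MetricallyOS 𝓕 A T S p ↔ EscoreConstOnSpheres 𝓕 A T S p := by
  refine ⟨MetricallyOS.escoreConstOnSpheres, fun hsph F hF x hx z hz hxz => ?_⟩
  rcases hxz.lt_or_eq with hlt | heq
  · exact hcons.escore_le_of_seminorm_lt hconv hTA hmix hsurj hSint hsph hF hx hz hlt
  · exact (hsph F hF x hx z hz heq).le

theorem StrictlyConsistent.strictlyMetricallyOS_iff (hsc : StrictlyConsistent 𝓕 A T S)
    (hconv : MixConvex 𝓕) (hTA : ∀ F ∈ 𝓕, T F ∈ A) (hmix : MixContinuous 𝓕 T)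
    (hsurj : ∀ x ∈ A, ∃ F ∈ 𝓕, T F = x) (hSint : ∀ x ∈ A, ∀ F ∈ 𝓕, Integrable (S x) F) :
    StrictlyMetricallyOS 𝓕 A T S p ↔ EscoreConstOnSpheres 𝓕 A T S p := by
  refine ⟨fun h => h.1.escoreConstOnSpheres, fun hsph => ⟨?_, ?_⟩⟩
  · exact (hsc.1.metricallyOS_iff hconv hTA hmix hsurj hSint).2 hsph
  · exact fun F hF x hx z hz hxz =>
      hsc.escore_lt_of_seminorm_lt hconv hTA hmix hsurj hSint hsph hF hx hz hxz

end OrderSensitivity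

theorem statement8_general {Ω : Type*} [MeasurableSpace Ω] {k : ℕ}
    (𝓕 : Set (Measure Ω))
    (hconv : MixConvex 𝓕)
    (A : Set (Fin k → ℝ)) (T : Measure Ω → (Fin k → ℝ))
    (hTA : ∀ F ∈ 𝓕, T F ∈ A)
    (hmix : MixContinuous 𝓕 T)
    (hsurj : ∀ x ∈ A, ∃ F ∈ 𝓕, T F = x)
    (S : (Fin k → ℝ) → Ω → ℝ)
    (hSint : ∀ x ∈ A, ∀ F ∈ 𝓕, Integrable (S x) F)
    (nrm : (Fin k → ℝ) → ℝ)
    (hnrm_add : ∀ x y, nrm (x + y) ≤ nrm x + nrm y)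
    (hnrm_smul : ∀ (c : ℝ) (x), nrm (c • x) = |c| * nrm x) :
    (Consistent 𝓕 A T S →
      (MetricallyOS 𝓕 A T S nrm ↔
        ∀ F ∈ 𝓕, ∀ x ∈ A, ∀ z ∈ A,
          nrm (x - T F) = nrm (z - T F) → escore S x F = escore S z F)) ∧
    (StrictlyConsistent 𝓕 A T S →
      (StrictlyMetricallyOS 𝓕 A T S nrm ↔
        ∀ F ∈ 𝓕, ∀ x ∈ A, ∀ z ∈ A,
          nrm (x - T F) = nrm (z - T F) → escore S x F = escore S z F)) := by
  let p : Seminorm ℝ (Fin k → ℝ) := Seminorm.of nrm hnrm_add fun c x => hnrm_smul c x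
  exact ⟨fun hcons => hcons.metricallyOS_iff (p := p) hconv hTA hmix hsurj hSint,
    fun hsc => hsc.strictlyMetricallyOS_iff (p := p) hconv hTA hmix hsurj hSint⟩

/-- For a convex class `𝓕`, a mixture-continuous surjective functional `T`
and a norm `nrm` on `ℝ^k`: a (strictly) `𝓕`-consistent scoring function `S` is (strictly)
metrically `𝓕`-order-sensitive for `T` relative to `nrm` if and only if for all `F ∈ 𝓕`
and `x, z ∈ A` with `nrm (x - T F) = nrm (z - T F)` one has `S̄(x,F) = S̄(z,F)`. -/
theorem statement8 {Ω : Type*} [MeasurableSpace Ω] {k : ℕ}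
    (𝓕 : Set (Measure Ω)) (hprob : ∀ F ∈ 𝓕, IsProbabilityMeasure F)
    (hconv : MixConvex 𝓕)
    (A : Set (Fin k → ℝ)) (T : Measure Ω → (Fin k → ℝ))
    (hTA : ∀ F ∈ 𝓕, T F ∈ A)
    (hmix : MixContinuous 𝓕 T)
    (hsurj : ∀ x ∈ A, ∃ F ∈ 𝓕, T F = x)
    (S : (Fin k → ℝ) → Ω → ℝ)
    (hSint : ∀ x ∈ A, ∀ F ∈ 𝓕, Integrable (S x) F)
    (nrm : (Fin k → ℝ) → ℝ)
    (hnrm_zero : ∀ x, nrm x = 0 ↔ x = 0)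
    (hnrm_add : ∀ x y, nrm (x + y) ≤ nrm x + nrm y)
    (hnrm_smul : ∀ (c : ℝ) (x), nrm (c • x) = |c| * nrm x) :
    (Consistent 𝓕 A T S →
      (MetricallyOS 𝓕 A T S nrm ↔
        ∀ F ∈ 𝓕, ∀ x ∈ A, ∀ z ∈ A,
          nrm (x - T F) = nrm (z - T F) → escore S x F = escore S z F)) ∧
    (StrictlyConsistent 𝓕 A T S →
      (StrictlyMetricallyOS 𝓕 A T S nrm ↔
        ∀ F ∈ 𝓕, ∀ x ∈ A, ∀ z ∈ A,
          nrm (x - T F) = nrm (z - T F) → escore S x F = escore S z F)) :=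
  statement8_general 𝓕 hconv A T hTA hmix hsurj S hSint nrm hnrm_add hnrm_smul
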